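/- arXiv:1805.03041 — 3 statements merged into one kernel-verified Lean document; each statement's English description precedes it below -/
import Mathlib

section
/- Let B = {b₀ = (0,0), b₁ = (1,0), b₂ = (0,1)} ⊆ ℤ² with 8-adjacency, let ℤ have 2-adjacency, and define p : ℤ → B by p(i) = b_{i mod 3}. Then p is a (2,8)-continuous surjection that has the unique path lifting property, the point 0 is a conciliator point for p, and p is not a digital (2,8)-covering map. (Example 3.7) -/
open Set

/-- 2-adjacency on `ℤ` (the `l₁`-adjacency on `ℤ`): `x` and `y` are distinct with `|x - y| = 1`. -/
def adj2 (x y : ℤ) : Prop := |x - y| = 1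

/-- 8-adjacency on `ℤ²` (the `l₂`-adjacency on `ℤ²`). -/
def adj8 (p q : ℤ × ℤ) : Prop := p ≠ q ∧ |p.1 - q.1| ≤ 1 ∧ |p.2 - q.2| ≤ 1

/-- 26-adjacency on `ℤ³` (the `l₃`-adjacency on `ℤ³`). -/
def adj26 (p q : ℤ × ℤ × ℤ) : Prop :=
  p ≠ q ∧ |p.1 - q.1| ≤ 1 ∧ |p.2.1 - q.2.1| ≤ 1 ∧ |p.2.2 - q.2.2| ≤ 1

/-- An adjacency relation (as any `l_u`-adjacency is) is symmetric and irreflexive. -/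
def IsAdjacency {A : Type*} (κ : A → A → Prop) : Prop := Symmetric κ ∧ Irreflexive κ

/-- `f` is `(κ,λ)`-continuous on `X`: κ-adjacent points are mapped to equal or λ-adjacent
points. -/
def DigContOn {A B : Type*} (f : A → B) (X : Set A)
    (κ : A → A → Prop) (lam : B → B → Prop) : Prop :=
  ∀ x₀ ∈ X, ∀ x₁ ∈ X, κ x₀ x₁ → f x₀ = f x₁ ∨ lam (f x₀) (f x₁)

/-- `f : [0,m]_ℤ → X` is a digital `κ`-path of length `m` in `X`,
i.e. a `(2,κ)`-continuous map on `[0,m]_ℤ` with values in `X`. -/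
def IsDigPath {A : Type*} (X : Set A) (κ : A → A → Prop) (m : ℕ) (f : ℤ → A) : Prop :=
  (∀ i ∈ Icc (0 : ℤ) (m : ℤ), f i ∈ X) ∧
  ∀ i ∈ Icc (0 : ℤ) (m : ℤ), ∀ j ∈ Icc (0 : ℤ) (m : ℤ),
    adj2 i j → f i = f j ∨ κ (f i) (f j)

/-- There is a digital `κ`-path of length `m` in `X` from `x` to `y`. -/
def ReachIn {A : Type*} (X : Set A) (κ : A → A → Prop) (x y : A) (m : ℕ) : Prop :=
  ∃ f : ℤ → A, IsDigPath X κ m f ∧ f 0 = x ∧ f (m : ℤ) = y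

/-- `X` is `κ`-connected: every two of its points are joined by a `κ`-path in `X`. -/
def DigConnected {A : Type*} (X : Set A) (κ : A → A → Prop) : Prop :=
  ∀ x ∈ X, ∀ y ∈ X, ∃ m : ℕ, ReachIn X κ x y m

/-- The `κ`-neighborhood `N_κ(e₀, ε)` of `e₀` in `X` with radius `ε`:
points of `X` whose shortest `κ`-path distance from `e₀` is at most `ε`, together with `e₀`. -/
def Nbhd {A : Type*} (X : Set A) (κ : A → A → Prop) (e₀ : A) (ε : ℕ) : Set A :=
  {e ∈ X | ∃ m : ℕ, m ≤ ε ∧ ReachIn X κ e₀ e m} ∪ {e₀}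

/-- The restriction of `f` to `X` is a `(κ,λ)`-isomorphism onto `Y`: a `(κ,λ)`-continuous
bijection of `X` onto `Y` whose inverse is `(λ,κ)`-continuous. -/
def IsDigIsoOn {A B : Type*} (f : A → B) (X : Set A) (Y : Set B)
    (κ : A → A → Prop) (lam : B → B → Prop) : Prop :=
  MapsTo f X Y ∧ InjOn f X ∧ SurjOn f X Y ∧ DigContOn f X κ lam ∧
  ∀ x₀ ∈ X, ∀ x₁ ∈ X, lam (f x₀) (f x₁) → x₀ = x₁ ∨ κ x₀ x₁

/-- `p` is a radius-`n` digital `(κ,λ)`-covering map of `E` onto `Bs`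
(`n = 1` gives the usual digital `(κ,λ)`-covering map): a `(κ,λ)`-continuous surjection
such that for each `b ∈ Bs` there is a set `F` of points of the fiber over `b` whose radius-`n`
neighborhoods are pairwise disjoint, partition `p⁻¹(N_λ(b,n))`, and are each mapped
isomorphically onto `N_λ(b,n)` by `p`. -/
def IsRadiusCovering {A B : Type*} (p : A → B) (E : Set A) (Bs : Set B)
    (κ : A → A → Prop) (lam : B → B → Prop) (n : ℕ) : Prop :=
  MapsTo p E Bs ∧ SurjOn p E Bs ∧ DigContOn p E κ lam ∧
  ∀ b ∈ Bs, ∃ F : Set A, F ⊆ {e ∈ E | p e = b} ∧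
    (E ∩ p ⁻¹' (Nbhd Bs lam b n) = ⋃ e ∈ F, Nbhd E κ e n) ∧
    F.Pairwise (fun e e' => Disjoint (Nbhd E κ e n) (Nbhd E κ e' n)) ∧
    ∀ e ∈ F, IsDigIsoOn p (Nbhd E κ e n) (Nbhd Bs lam b n) κ lam

/-- `p` is a radius-`n` local `(κ,λ)`-isomorphism (`n = 1` gives the usual local
`(κ,λ)`-isomorphism): for every `e ∈ E` the restriction of `p` to `N_κ(e,n)` is a
`(κ,λ)`-isomorphism onto `N_λ(p e, n)`. -/
def IsLocalIso {A B : Type*} (p : A → B) (E : Set A) (Bs : Set B)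
    (κ : A → A → Prop) (lam : B → B → Prop) (n : ℕ) : Prop :=
  ∀ e ∈ E, IsDigIsoOn p (Nbhd E κ e n) (Nbhd Bs lam (p e) n) κ lam

/-- `p` has the digital path lifting property: every `λ`-path `a` in `Bs` and every point
`e ∈ E` of the fiber over `a 0` admit a lifting of `a` beginning at `e`. -/
def PathLiftingProp {A B : Type*} (p : A → B) (E : Set A) (Bs : Set B)
    (κ : A → A → Prop) (lam : B → B → Prop) : Prop :=
  ∀ (m : ℕ) (a : ℤ → B), IsDigPath Bs lam m a → ∀ e ∈ E, p e = a 0 →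
    ∃ g : ℤ → A, IsDigPath E κ m g ∧ (∀ i ∈ Icc (0 : ℤ) (m : ℤ), p (g i) = a i) ∧ g 0 = e

/-- `p` has the uniqueness of digital path lifts property: two `κ`-paths in `E` with the
same projection and the same starting point coincide (on their domain `[0,m]_ℤ`). -/
def UniqLiftsProp {A B : Type*} (p : A → B) (E : Set A) (κ : A → A → Prop) : Prop :=
  ∀ (m : ℕ) (a b : ℤ → A), IsDigPath E κ m a → IsDigPath E κ m b →
    (∀ i ∈ Icc (0 : ℤ) (m : ℤ), p (a i) = p (b i)) → a 0 = b 0 →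
    EqOn a b (Icc (0 : ℤ) (m : ℤ))

/-- `p` has the unique path lifting property (u.p.l.): both the path lifting property and
the uniqueness of path lifts property. -/
def UPL {A B : Type*} (p : A → B) (E : Set A) (Bs : Set B)
    (κ : A → A → Prop) (lam : B → B → Prop) : Prop :=
  PathLiftingProp p E Bs κ lam ∧ UniqLiftsProp p E κ

/-- `e` is a conciliator point for `p`: there are `e', e'' ∈ N_κ(e,1)` which are not
`κ`-adjacent but whose images are `λ`-adjacent. -/
def IsConciliator {A B : Type*} (p : A → B) (E : Set A)
    (κ : A → A → Prop) (lam : B → B → Prop) (e : A) : Prop :=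
  ∃ e' ∈ Nbhd E κ e 1, ∃ e'' ∈ Nbhd E κ e 1, ¬ κ e' e'' ∧ lam (p e') (p e'')

/-- `f : [0,m]_ℤ → X` is a simple `κ`-loop of length `m` in `X`: a closed `κ`-path such that
`f 0, …, f (m-1)` are pairwise distinct and `f i`, `f j` are `κ`-adjacent iff
`j = i ± 1 (mod m)`. -/
def IsSimpleLoop {A : Type*} (X : Set A) (κ : A → A → Prop) (m : ℕ) (f : ℤ → A) : Prop :=
  IsDigPath X κ m f ∧ f 0 = f (m : ℤ) ∧
  (∀ i ∈ Ico (0 : ℤ) (m : ℤ), ∀ j ∈ Ico (0 : ℤ) (m : ℤ), f i = f j → i = j) ∧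
  ∀ i ∈ Ico (0 : ℤ) (m : ℤ), ∀ j ∈ Ico (0 : ℤ) (m : ℤ),
    (κ (f i) (f j) ↔ (j % (m : ℤ) = (i + 1) % (m : ℤ) ∨ j % (m : ℤ) = (i - 1) % (m : ℤ)))

/-! The base `{(0,0), (1,0), (0,1)}` is an 8-clique and `p` maps every window of three consecutive
integers bijectively onto it. Hence a lift can always follow a path
by steps of length at most one, and two such lifts agree step by step. But `p` maps `1`
and `-1`, which are not 2-adjacent, to the 8-adjacent points `(1,0)` and `(0,1)`, so `0` is a
conciliator point; a covering map is a local isomorphism and therefore has none. -/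

lemma adj2_comm {x y : ℤ} : adj2 x y ↔ adj2 y x := by
  rw [adj2, adj2, abs_sub_comm]

lemma adj2_iff {x y : ℤ} : adj2 x y ↔ y = x + 1 ∨ x = y + 1 := by
  rw [adj2, abs_eq zero_le_one]
  omega

lemma eq_or_adj2_iff_abs_sub_le_one {x y : ℤ} : x = y ∨ adj2 x y ↔ |x - y| ≤ 1 := by
  rw [adj2, abs_le, abs_eq zero_le_one]
  omega

lemma adj8_irrefl (b : ℤ × ℤ) : ¬ adj8 b b := fun h => h.1 rfl

section Neighborhoods

variable {A B : Type*} {X : Set A} {κ : A → A → Prop}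

lemma mem_nbhd_one_of_adj (hκ : ∀ a b, κ a b → κ b a) {e x : A} (he : e ∈ X) (hx : x ∈ X)
    (h : κ e x) : x ∈ Nbhd X κ e 1 := by
  refine Or.inl ⟨hx, 1, le_rfl, fun i => if i = 0 then e else x, ⟨?_, ?_⟩, rfl, rfl⟩
  · intro i _
    dsimp only
    split_ifs <;> assumption
  · intro i hi j hj hij
    obtain ⟨rfl, rfl⟩ | ⟨rfl, rfl⟩ : i = 0 ∧ j = 1 ∨ i = 1 ∧ j = 0 := by
      rw [adj2_iff] at hij
      simp only [mem_Icc, Nat.cast_one] at hi hj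
      omega
    · exact Or.inr h
    · exact Or.inr (hκ _ _ h)

lemma digContOn_of_pairwise_adj {lam : B → B → Prop} {f : A → B} {Y : Set B}
    (hf : MapsTo f X Y) (hY : Y.Pairwise lam) : DigContOn f X κ lam := fun x₀ h₀ x₁ h₁ _ =>
  (eq_or_ne (f x₀) (f x₁)).imp_right (hY (hf h₀) (hf h₁))

end Neighborhoods

section PathsInInt

lemma IsDigPath.abs_sub_le_one {X : Set ℤ} {m : ℕ} {g : ℤ → ℤ} (hg : IsDigPath X adj2 m g)
    {i : ℤ} (hi : i ∈ Ico (0 : ℤ) m) : |g (i + 1) - g i| ≤ 1 :=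
  eq_or_adj2_iff_abs_sub_le_one.mp <|
    hg.2 (i + 1) ⟨by linarith [hi.1], by linarith [hi.2]⟩ i ⟨hi.1, hi.2.le⟩
      (adj2_iff.mpr (.inr rfl))

lemma isDigPath_univ_of_abs_sub_le_one {m : ℕ} {g : ℤ → ℤ}
    (hg : ∀ i ∈ Ico (0 : ℤ) m, |g (i + 1) - g i| ≤ 1) : IsDigPath univ adj2 m g := by
  refine ⟨fun _ _ => trivial, fun i hi j hj hij => ?_⟩
  rcases adj2_iff.mp hij with rfl | rfl
  · rw [eq_or_adj2_iff_abs_sub_le_one, abs_sub_comm]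
    exact hg i ⟨hi.1, by linarith [hj.2]⟩
  · exact eq_or_adj2_iff_abs_sub_le_one.mpr (hg j ⟨hj.1, by linarith [hi.2]⟩)

variable {B : Type*} {p : ℤ → B}

/-- Consecutive points of two lifts with a common point lie in a window of three integers. -/
lemma uniqLiftsProp_of_injOn_Icc (E : Set ℤ) (hp : ∀ x, InjOn p (Icc x (x + 2))) :
    UniqLiftsProp p E adj2 := by
  intro m a b ha hb hab h₀
  suffices ∀ n : ℤ, 0 ≤ n → n ≤ m → a n = b n from fun n hn => this n hn.1 hn.2
  refine Int.le_induction (fun _ => h₀) fun n hn ih hnm => ?_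
  have hn' : n ∈ Ico (0 : ℤ) m := ⟨hn, by linarith⟩
  have hta := abs_le.mp (ha.abs_sub_le_one hn')
  have htb := abs_le.mp (hb.abs_sub_le_one hn')
  have h := ih hn'.2.le
  exact hp (a n - 1) ⟨by linarith, by linarith⟩ ⟨by linarith, by linarith⟩
    (hab (n + 1) ⟨by linarith, hnm⟩)

lemma pathLiftingProp_of_surjOn_Icc {Bs : Set B} {lam : B → B → Prop}
    (hp : ∀ x, SurjOn p (Icc (x - 1) (x + 1)) Bs) : PathLiftingProp p univ Bs adj2 lam := by
  intro m a ha e _ he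
  have hstep : ∀ (x : ℤ) (b : B), ∃ y, b ∈ Bs → y ∈ Icc (x - 1) (x + 1) ∧ p y = b := by
    intro x b
    by_cases hb : b ∈ Bs
    · obtain ⟨y, hy, hpy⟩ := hp x hb
      exact ⟨y, fun _ => ⟨hy, hpy⟩⟩
    · exact ⟨x, fun h => absurd h hb⟩
  choose next hnext using hstep
  let lift : ℕ → ℤ := fun n => Nat.rec e (fun k y => next y (a (k + 1))) n
  have hlift : ∀ n : ℕ, (n : ℤ) < m →
      lift (n + 1) ∈ Icc (lift n - 1) (lift n + 1) ∧ p (lift (n + 1)) = a (n + 1) :=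
    fun n hn => hnext _ _ (ha.1 _ ⟨by positivity, by omega⟩)
  refine ⟨fun i => lift i.toNat, isDigPath_univ_of_abs_sub_le_one fun i hi => ?_, ?_, rfl⟩
  · obtain ⟨hi₀, him⟩ := hi
    obtain ⟨h₁, h₂⟩ := (hlift i.toNat (by omega)).1
    rw [show (i + 1).toNat = i.toNat + 1 by omega]
    exact abs_le.mpr ⟨by linarith, by linarith⟩
  · rintro i ⟨hi₀, him⟩
    rcases hi₀.eq_or_lt with rfl | hpos
    · exact he
    · have h := (hlift (i - 1).toNat (by omega)).2
      rwa [show (i - 1).toNat + 1 = i.toNat by omega, Int.toNat_of_nonneg (by omega),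
        sub_add_cancel] at h

end PathsInInt

section Coverings

variable {A B : Type*} {p : A → B} {E : Set A} {Bs : Set B} {κ : A → A → Prop}
  {lam : B → B → Prop}

/-- Each point of `E` lies in the fibre-neighbourhood of exactly one sheet centre, and by
injectivity of `p` on that sheet it is that centre. -/
lemma IsRadiusCovering.isLocalIso (hcov : IsRadiusCovering p E Bs κ lam 1) :
    IsLocalIso p E Bs κ lam 1 := by
  intro e he
  obtain ⟨hmaps, -, -, hsheets⟩ := hcov
  obtain ⟨F, hF, hunion, -, hiso⟩ := hsheets (p e) (hmaps he)
  have hmem : e ∈ ⋃ e' ∈ F, Nbhd E κ e' 1 := hunion ▸ ⟨he, Or.inr rfl⟩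
  obtain ⟨e', he'F, hee'⟩ := mem_iUnion₂.mp hmem
  obtain rfl : e' = e := (hiso e' he'F).2.1 (Or.inr rfl) hee' (hF he'F).2
  exact hiso e' he'F

lemma IsLocalIso.not_isConciliator (hloc : IsLocalIso p E Bs κ lam 1)
    (hlam : ∀ b, ¬ lam b b) {e : A} (he : e ∈ E) : ¬ IsConciliator p E κ lam e := by
  rintro ⟨e', he', e'', he'', hnadj, hadj⟩
  rcases (hloc e he).2.2.2.2 e' he' e'' he'' hadj with rfl | h
  · exact hlam _ hadj
  · exact hnadj h

end Coverings

def triangle : Set (ℤ × ℤ) := {((0 : ℤ), (0 : ℤ)), (1, 0), (0, 1)}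

def triangleMap (i : ℤ) : ℤ × ℤ :=
  if i % 3 = 0 then ((0 : ℤ), (0 : ℤ)) else if i % 3 = 1 then (1, 0) else (0, 1)

lemma triangleMap_eq_iff {i j : ℤ} : triangleMap i = triangleMap j ↔ i % 3 = j % 3 := by
  have hi : i % 3 = 0 ∨ i % 3 = 1 ∨ i % 3 = 2 := by omega
  have hj : j % 3 = 0 ∨ j % 3 = 1 ∨ j % 3 = 2 := by omega
  rcases hi with hi | hi | hi <;> rcases hj with hj | hj | hj <;>
    simp [triangleMap, hi, hj]

lemma mapsTo_triangleMap : MapsTo triangleMap univ triangle := by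
  intro i _
  have hi : i % 3 = 0 ∨ i % 3 = 1 ∨ i % 3 = 2 := by omega
  rcases hi with hi | hi | hi <;> simp [triangleMap, triangle, hi]

lemma surjOn_triangleMap_Icc (x : ℤ) : SurjOn triangleMap (Icc (x - 1) (x + 1)) triangle := by
  have hvertex : ∀ r : ℤ, ∃ y ∈ Icc (x - 1) (x + 1), triangleMap y = triangleMap r :=
    fun r => ⟨x - 1 + (r - (x - 1)) % 3, ⟨by omega, by omega⟩, triangleMap_eq_iff.mpr (by omega)⟩
  rintro b (rfl | rfl | rfl)
  exacts [hvertex 0, hvertex 1, hvertex 2]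

lemma injOn_triangleMap_Icc (x : ℤ) : InjOn triangleMap (Icc x (x + 2)) := by
  intro i hi j hj hij
  have := triangleMap_eq_iff.mp hij
  simp only [mem_Icc] at hi hj
  omega

lemma triangle_pairwise_adj8 : triangle.Pairwise adj8 := by
  rintro b (rfl | rfl | rfl) b' (rfl | rfl | rfl) hne <;>
    first | exact absurd rfl hne | exact ⟨hne, by decide, by decide⟩

lemma isConciliator_triangleMap_zero : IsConciliator triangleMap univ adj2 adj8 0 := by
  have hnbhd : ∀ x : ℤ, adj2 0 x → x ∈ Nbhd univ adj2 0 1 := fun x =>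
    mem_nbhd_one_of_adj (κ := adj2) (fun _ _ => adj2_comm.mp) (mem_univ _) (mem_univ _)
  refine ⟨1, hnbhd 1 (by norm_num [adj2]), -1, hnbhd (-1) (by norm_num [adj2]),
    by norm_num [adj2], ?_⟩
  exact triangle_pairwise_adj8 (mapsTo_triangleMap (mem_univ _))
    (mapsTo_triangleMap (mem_univ _)) (by rw [Ne, triangleMap_eq_iff]; decide)

/-- Example 3.7: for `B = {b₀ = (0,0), b₁ = (1,0), b₂ = (0,1)} ⊆ ℤ²` with 8-adjacency and
`p : ℤ → B` given by `p i = b_{i mod 3}`, the map `p` is a `(2,8)`-continuous surjection with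
the unique path lifting property, `0` is a conciliator point for `p`, and `p` is not a
digital `(2,8)`-covering map. -/
theorem example_3_7 (p : ℤ → ℤ × ℤ)
    (hp : ∀ i : ℤ, p i =
      if i % 3 = 0 then ((0 : ℤ), (0 : ℤ)) else if i % 3 = 1 then (1, 0) else (0, 1)) :
    Set.MapsTo p Set.univ ({((0 : ℤ), (0 : ℤ)), (1, 0), (0, 1)} : Set (ℤ × ℤ)) ∧
    Set.SurjOn p Set.univ ({((0 : ℤ), (0 : ℤ)), (1, 0), (0, 1)} : Set (ℤ × ℤ)) ∧
    DigContOn p Set.univ adj2 adj8 ∧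
    UPL p Set.univ ({((0 : ℤ), (0 : ℤ)), (1, 0), (0, 1)} : Set (ℤ × ℤ)) adj2 adj8 ∧
    IsConciliator p Set.univ adj2 adj8 0 ∧
    ¬ IsRadiusCovering p Set.univ ({((0 : ℤ), (0 : ℤ)), (1, 0), (0, 1)} : Set (ℤ × ℤ))
        adj2 adj8 1 := by
  obtain rfl : p = triangleMap := funext hp
  refine ⟨mapsTo_triangleMap, (surjOn_triangleMap_Icc 0).mono (subset_univ _) subset_rfl,
    digContOn_of_pairwise_adj mapsTo_triangleMap triangle_pairwise_adj8,
    ⟨pathLiftingProp_of_surjOn_Icc surjOn_triangleMap_Icc,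
      uniqLiftsProp_of_injOn_Icc _ injOn_triangleMap_Icc⟩,
    isConciliator_triangleMap_zero, fun hcov =>
      hcov.isLocalIso.not_isConciliator adj8_irrefl trivial isConciliator_triangleMap_zero⟩
end

section
/- For all integers x₁, y₁, a, b, let X = {q₀ = (x₁,y₁), q₁ = (x₁−1,y₁+1), q₂ = (x₁−2,y₁+1), q₃ = (x₁−3,y₁), q₄ = (x₁−3,y₁−1), q₅ = (x₁−2,y₁−2), q₆ = (x₁−1,y₁−1)} ⊆ ℤ² and Y = {v₀ = (a,b), v₁ = (a−1,b+1), v₂ = (a−2,b), v₃ = (a−1,b−1)} ⊆ ℤ², both with 8-adjacency, and let h : X → Y be defined by h(q_i) = v_{i mod 4}. Then h is not (8,8)-continuous: q₀ and q₆ are 8-adjacent, but h(q₀) = v₀ and h(q₆) = v₂ are neither equal nor 8-adjacent. (Example 4.1, correcting Han's example) -/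
open Set

lemma not_digContOn_of_adj {A B : Type*} {f : A → B} {X : Set A}
    {κ : A → A → Prop} {lam : B → B → Prop} {x₀ x₁ : A} (hx₀ : x₀ ∈ X) (hx₁ : x₁ ∈ X)
    (hκ : κ x₀ x₁) (hne : f x₀ ≠ f x₁) (hlam : ¬ lam (f x₀) (f x₁)) :
    ¬ DigContOn f X κ lam := fun hf =>
  (hf x₀ hx₀ x₁ hx₁ hκ).elim hne hlam

lemma adj8_sub_one_sub_one (x y : ℤ) : adj8 (x, y) (x - 1, y - 1) := by
  refine ⟨?_, by simp, by simp⟩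
  simp only [ne_eq, Prod.mk.injEq]
  omega

lemma not_adj8_of_two_le_abs_fst {p q : ℤ × ℤ} (hpq : 2 ≤ |p.1 - q.1|) : ¬ adj8 p q :=
  fun ⟨_, h, _⟩ => by omega

lemma pair_ne_sub_two_fst (a b : ℤ) : ((a, b) : ℤ × ℤ) ≠ (a - 2, b) := by
  simp only [ne_eq, Prod.mk.injEq]
  omega

theorem example_4_1_general (x₁ y₁ a b : ℤ) (h : ℤ × ℤ → ℤ × ℤ)
    (h0 : h (x₁, y₁) = (a, b))
    (h6 : h (x₁ - 1, y₁ - 1) = (a - 2, b)) :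
    adj8 (x₁, y₁) (x₁ - 1, y₁ - 1) ∧
    ((a, b) : ℤ × ℤ) ≠ (a - 2, b) ∧ ¬ adj8 (a, b) (a - 2, b) ∧
    ¬ DigContOn h
      ({(x₁, y₁), (x₁ - 1, y₁ + 1), (x₁ - 2, y₁ + 1), (x₁ - 3, y₁),
        (x₁ - 3, y₁ - 1), (x₁ - 2, y₁ - 2), (x₁ - 1, y₁ - 1)} : Set (ℤ × ℤ))
      adj8 adj8 := by
  have hne := pair_ne_sub_two_fst a b
  have hnadj : ¬ adj8 (a, b) (a - 2, b) := not_adj8_of_two_le_abs_fst (by simp)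
  refine ⟨adj8_sub_one_sub_one x₁ y₁, hne, hnadj, ?_⟩
  exact not_digContOn_of_adj (by simp) (by simp) (adj8_sub_one_sub_one x₁ y₁)
    (by rwa [h0, h6]) (by rwa [h0, h6])

/-- Example 4.1 (correcting Han's example): the map `h : X → Y` with `h qᵢ = v_{i mod 4}` is
not `(8,8)`-continuous, since `q₀` and `q₆` are 8-adjacent while `h q₀ = v₀` and
`h q₆ = v₂` are neither equal nor 8-adjacent. -/
theorem example_4_1 (x₁ y₁ a b : ℤ) (h : ℤ × ℤ → ℤ × ℤ)
    (h0 : h (x₁, y₁) = (a, b))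
    (h1 : h (x₁ - 1, y₁ + 1) = (a - 1, b + 1))
    (h2 : h (x₁ - 2, y₁ + 1) = (a - 2, b))
    (h3 : h (x₁ - 3, y₁) = (a - 1, b - 1))
    (h4 : h (x₁ - 3, y₁ - 1) = (a, b))
    (h5 : h (x₁ - 2, y₁ - 2) = (a - 1, b + 1))
    (h6 : h (x₁ - 1, y₁ - 1) = (a - 2, b)) :
    adj8 (x₁, y₁) (x₁ - 1, y₁ - 1) ∧
    ((a, b) : ℤ × ℤ) ≠ (a - 2, b) ∧ ¬ adj8 (a, b) (a - 2, b) ∧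
    ¬ DigContOn h
      ({(x₁, y₁), (x₁ - 1, y₁ + 1), (x₁ - 2, y₁ + 1), (x₁ - 3, y₁),
        (x₁ - 3, y₁ - 1), (x₁ - 2, y₁ - 2), (x₁ - 1, y₁ - 1)} : Set (ℤ × ℤ))
      adj8 adj8 :=
  example_4_1_general x₁ y₁ a b h h0 h6
end

section
/- Let p : (E,κ) → (B,λ) be a (κ,λ)-continuous surjection between connected digital images which is a radius 2 local isomorphism. If B is simply connected, then p is a (κ,λ)-isomorphism. (Corollary 4.9) -/
open Set

/-- `f'` (defined on `[0,m']_ℤ`) is a trivial extension of the loop `f` (defined on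
`[0,m]_ℤ`): `f'` is obtained from a factorization of `f` into paths by inserting trivial
(constant) loops, i.e. `f' = f ∘ φ` for a monotone reparametrization `φ` with steps `0` or
`1` sending `0` to `0` and `m'` to `m`. -/
def IsTrivialExt {A : Type*} (m m' : ℕ) (f f' : ℤ → A) : Prop :=
  ∃ φ : ℤ → ℤ, φ 0 = 0 ∧ φ (m' : ℤ) = (m : ℤ) ∧
    (∀ i : ℤ, 0 ≤ i → i < (m' : ℤ) → (φ (i + 1) = φ i ∨ φ (i + 1) = φ i + 1)) ∧
    ∀ i ∈ Set.Icc (0 : ℤ) (m' : ℤ), f' i = f (φ i)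

/-- `F : [0,m]_ℤ × [0,s]_ℤ → Bs` is a digital `λ`-homotopy from `f` to `g` holding the
endpoints fixed: its time-slices and its tracks are `(2,λ)`-continuous, it starts at `f`
and ends at `g`, and it keeps both endpoints fixed. -/
def DigHomotopyRelEnds {B : Type*} (Bs : Set B) (lam : B → B → Prop)
    (m s : ℕ) (F : ℤ → ℤ → B) (f g : ℤ → B) : Prop :=
  (∀ x ∈ Set.Icc (0 : ℤ) (m : ℤ), ∀ t ∈ Set.Icc (0 : ℤ) (s : ℤ), F x t ∈ Bs) ∧
  (∀ x ∈ Set.Icc (0 : ℤ) (m : ℤ), F x 0 = f x ∧ F x (s : ℤ) = g x) ∧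
  (∀ x ∈ Set.Icc (0 : ℤ) (m : ℤ), ∀ t ∈ Set.Icc (0 : ℤ) (s : ℤ),
    ∀ t' ∈ Set.Icc (0 : ℤ) (s : ℤ), adj2 t t' → F x t = F x t' ∨ lam (F x t) (F x t')) ∧
  (∀ t ∈ Set.Icc (0 : ℤ) (s : ℤ), ∀ x ∈ Set.Icc (0 : ℤ) (m : ℤ),
    ∀ x' ∈ Set.Icc (0 : ℤ) (m : ℤ), adj2 x x' → F x t = F x' t ∨ lam (F x t) (F x' t)) ∧
  (∀ t ∈ Set.Icc (0 : ℤ) (s : ℤ), F 0 t = f 0 ∧ F (m : ℤ) t = f (m : ℤ))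

/-- Two `λ`-loops `f` (of length `m₁`) and `g` (of length `m₂`) with the same base point
belong to the same loop class: they have trivial extensions of a common length that are
joined by a digital homotopy holding the endpoints fixed. -/
def SameLoopClass {B : Type*} (Bs : Set B) (lam : B → B → Prop)
    (m₁ m₂ : ℕ) (f g : ℤ → B) : Prop :=
  ∃ (m s : ℕ) (f' g' : ℤ → B) (F : ℤ → ℤ → B),
    IsTrivialExt m₁ m f f' ∧ IsTrivialExt m₂ m g g' ∧
    DigHomotopyRelEnds Bs lam m s F f' g'

/-- `Bs` is simply connected: it is `λ`-connected and its digital fundamental group is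
trivial, i.e. every `λ`-loop belongs to the loop class of the constant loop at its base
point. -/
def DigSimplyConnected {B : Type*} (Bs : Set B) (lam : B → B → Prop) : Prop :=
  DigConnected Bs lam ∧
  ∀ b₀ ∈ Bs, ∀ (m : ℕ) (f : ℤ → B), IsDigPath Bs lam m f → f 0 = b₀ → f (m : ℤ) = b₀ →
    SameLoopClass Bs lam m 0 f (fun _ => b₀)

/-!
Since `p` is injective on every `N_κ(e,2)` and reflects adjacency there, a path in `B` lifts
uniquely one step at a time, and a digital homotopy can be lifted one time-slice at a time:
each point of the new slice is the unique preimage adjacent to the corresponding point of the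
old one, and the endpoints of the lifted slices never move. Lifting, from `e₁`, the projection
of a path from `e₁` to `e₂` with `p e₁ = p e₂` and its null-homotopy therefore gives a lift of
the constant loop that ends at `e₂`, so `e₁ = e₂`. Injectivity then upgrades the local
reflection of adjacency to a global one.
-/

section DigitalPaths

variable {A B : Type*} {X : Set A} {κ : A → A → Prop} {m : ℕ} {f : ℤ → A}

lemma DigContOn.comp {C : Type*} {Y : Set B} {μ : C → C → Prop} {lam : B → B → Prop}
    {g : B → C} {f : A → B} (hg : DigContOn g Y lam μ) (hf : DigContOn f X κ lam)
    (hXY : MapsTo f X Y) : DigContOn (g ∘ f) X κ μ := by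
  intro x₀ hx₀ x₁ hx₁ hx
  rcases hf x₀ hx₀ x₁ hx₁ hx with h | h
  · exact Or.inl (congrArg g h)
  · exact hg _ (hXY hx₀) _ (hXY hx₁) h

lemma IsDigPath.map {Y : Set B} {lam : B → B → Prop} {p : A → B} (hf : IsDigPath X κ m f)
    (hmaps : MapsTo p X Y) (hcont : DigContOn p X κ lam) : IsDigPath Y lam m (p ∘ f) :=
  ⟨hmaps.comp hf.1, hcont.comp hf.2 hf.1⟩

lemma IsDigPath.mem (hf : IsDigPath X κ m f) {i : ℤ} (hi : i ∈ Icc (0 : ℤ) m) : f i ∈ X :=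
  hf.1 i hi

lemma IsDigPath.step (hf : IsDigPath X κ m f) {i : ℤ} (h0 : 0 ≤ i) (hm : i < m) :
    f i = f (i + 1) ∨ κ (f i) (f (i + 1)) :=
  hf.2 i ⟨h0, hm.le⟩ (i + 1) ⟨by omega, by omega⟩ (by simp [adj2])

lemma isDigPath_of_step [Std.Symm κ] (hX : ∀ i ∈ Icc (0 : ℤ) m, f i ∈ X)
    (hstep : ∀ i : ℤ, 0 ≤ i → i < m → f i = f (i + 1) ∨ κ (f i) (f (i + 1))) :
    IsDigPath X κ m f := by
  refine ⟨hX, fun i ⟨hi0, him⟩ j ⟨hj0, hjm⟩ hij => ?_⟩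
  rcases abs_eq_abs.mp (hij.trans abs_one.symm) with h | h
  · obtain rfl : i = j + 1 := by omega
    exact (hstep j hj0 (by omega)).imp Eq.symm symm
  · obtain rfl : j = i + 1 := by omega
    exact hstep i hi0 (by omega)

lemma isDigPath_const {x : A} (hx : x ∈ X) : IsDigPath X κ m (fun _ => x) :=
  ⟨fun _ _ => hx, fun _ _ _ _ _ => Or.inl rfl⟩

lemma mem_nbhd_two_of_steps [Std.Symm κ] {a c d : A} (ha : a ∈ X) (hc : c ∈ X)
    (hd : d ∈ X) (hac : a = c ∨ κ a c) (hcd : c = d ∨ κ c d) : d ∈ Nbhd X κ a 2 := by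
  refine Or.inl ⟨hd, 2, le_rfl, fun i => if i ≤ 0 then a else if i ≤ 1 then c else d,
    isDigPath_of_step (fun i _ => ?_) (fun i h0 h2 => ?_), by simp, by simp⟩
  · split_ifs <;> assumption
  · obtain rfl | rfl : i = 0 ∨ i = 1 := by omega
    · simpa using hac
    · simpa using hcd

lemma nbhd_subset {x : A} (hx : x ∈ X) (n : ℕ) : Nbhd X κ x n ⊆ X := by
  rintro y (hy | rfl)
  exacts [hy.1, hx]

lemma mem_nbhd_self (x : A) (n : ℕ) : x ∈ Nbhd X κ x n :=
  Or.inr rfl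

lemma monotoneOn_of_trivialExt_steps {φ : ℤ → ℤ} {m' : ℕ}
    (hstep : ∀ i : ℤ, 0 ≤ i → i < m' → φ (i + 1) = φ i ∨ φ (i + 1) = φ i + 1) :
    MonotoneOn φ (Icc 0 m') := by
  rintro i ⟨hi0, -⟩ j ⟨-, hjm⟩ hij
  induction j, hij using Int.leInduction with
  | base => exact le_rfl
  | succ j hij ih =>
    have := ih (by omega)
    rcases hstep j (by omega) (by omega) with h | h <;> omega

lemma IsDigPath.comp_trivialExt {m' : ℕ} {φ : ℤ → ℤ} (hf : IsDigPath X κ m f) (hφ0 : φ 0 = 0)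
    (hφm : φ m' = m)
    (hstep : ∀ i : ℤ, 0 ≤ i → i < m' → φ (i + 1) = φ i ∨ φ (i + 1) = φ i + 1) :
    IsDigPath X κ m' (f ∘ φ) := by
  have hmono := monotoneOn_of_trivialExt_steps hstep
  have hmaps : MapsTo φ (Icc 0 m') (Icc 0 m) := fun i hi =>
    ⟨hφ0 ▸ hmono ⟨le_rfl, by omega⟩ hi hi.1, hφm ▸ hmono hi ⟨by omega, le_rfl⟩ hi.2⟩
  refine ⟨MapsTo.comp hf.1 hmaps,
    DigContOn.comp hf.2 (fun i ⟨hi0, him⟩ j ⟨hj0, hjm⟩ hij => ?_) hmaps⟩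
  rcases abs_eq_abs.mp (hij.trans abs_one.symm) with h | h
  · obtain rfl : i = j + 1 := by omega
    rcases hstep j hj0 (by omega) with h' | h' <;> simp [adj2, h']
  · obtain rfl : j = i + 1 := by omega
    rcases hstep i hi0 (by omega) with h' | h' <;> simp [adj2, h']

end DigitalPaths

namespace IsLocalIso

variable {A B : Type*} {E : Set A} {Bs : Set B} {κ : A → A → Prop} {lam : B → B → Prop}
  {p : A → B}

lemma eq_or_adj_of_mem_nbhd (hloc : IsLocalIso p E Bs κ lam 2) {e x y : A} (he : e ∈ E)
    (hx : x ∈ Nbhd E κ e 2) (hy : y ∈ Nbhd E κ e 2) (hxy : p x = p y ∨ lam (p x) (p y)) :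
    x = y ∨ κ x y := by
  obtain ⟨-, hinj, -, -, hrefl⟩ := hloc e he
  exact hxy.elim (fun h => Or.inl (hinj hx hy h)) (hrefl x hx y hy)

lemma eq_of_adj_of_map_eq [Std.Symm κ] (hloc : IsLocalIso p E Bs κ lam 2) {x y : A}
    (hx : x ∈ E) (hy : y ∈ E) (hxy : x = y ∨ κ x y) (hp : p x = p y) : x = y :=
  (hloc x hx).2.1 (mem_nbhd_self x 2) (mem_nbhd_two_of_steps hx hx hy (Or.inl rfl) hxy) hp

lemma exists_adj_lift [Std.Symm lam] (hloc : IsLocalIso p E Bs κ lam 2)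
    (hmaps : MapsTo p E Bs) {e : A} (he : e ∈ E) {b : B} (hb : b ∈ Bs)
    (heb : p e = b ∨ lam (p e) b) : ∃ e' ∈ E, p e' = b ∧ (e = e' ∨ κ e e') := by
  obtain ⟨e', he', rfl⟩ :=
    (hloc e he).2.2.1 (mem_nbhd_two_of_steps (hmaps he) (hmaps he) hb (Or.inl rfl) heb)
  exact ⟨e', nbhd_subset he 2 he', rfl,
    hloc.eq_or_adj_of_mem_nbhd he (mem_nbhd_self e 2) he' heb⟩

lemma uniqLiftsProp [Std.Symm κ] (hloc : IsLocalIso p E Bs κ lam 2) :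
    UniqLiftsProp p E κ := by
  intro m a b ha hb hab h0 i ⟨hi0, him⟩
  induction i, hi0 using Int.leInduction with
  | base => exact h0
  | succ i hi0 ih =>
    have hi : i + 1 ∈ Icc (0 : ℤ) m := ⟨by omega, him⟩
    have hai := ha.mem ⟨hi0, by omega⟩
    refine (hloc (a i) hai).2.1
      (mem_nbhd_two_of_steps hai hai (ha.mem hi) (Or.inl rfl) (ha.step hi0 (by omega)))
      (mem_nbhd_two_of_steps hai hai (hb.mem hi) (Or.inl rfl) ?_) (hab _ hi)
    exact ih (by omega) ▸ hb.step hi0 (by omega)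

lemma exists_lift_adj_to_lift [Std.Symm κ] [Std.Symm lam]
    (hloc : IsLocalIso p E Bs κ lam 2) (hmaps : MapsTo p E Bs) {m : ℕ} {h : ℤ → A}
    (hh : IsDigPath E κ m h) {a : ℤ → B} (ha : IsDigPath Bs lam m a)
    (hha : ∀ x ∈ Icc (0 : ℤ) m, p (h x) = a x ∨ lam (p (h x)) (a x)) :
    ∃ h' : ℤ → A, IsDigPath E κ m h' ∧
      ∀ x ∈ Icc (0 : ℤ) m, p (h' x) = a x ∧ (h x = h' x ∨ κ (h x) (h' x)) := by
  have hlift : ∀ x ∈ Icc (0 : ℤ) m, ∃ e ∈ E, p e = a x ∧ (h x = e ∨ κ (h x) e) :=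
    fun x hx => hloc.exists_adj_lift hmaps (hh.mem hx) (ha.mem hx) (hha x hx)
  have : Nonempty A := ⟨h 0⟩
  choose! h' hh'E hh'a hh'h using hlift
  refine ⟨h', ⟨hh'E, fun x hx y hy hxy => ?_⟩, fun x hx => ⟨hh'a x hx, hh'h x hx⟩⟩
  have hhx := hh.mem hx
  refine hloc.eq_or_adj_of_mem_nbhd hhx
    (mem_nbhd_two_of_steps hhx hhx (hh'E x hx) (Or.inl rfl) (hh'h x hx))
    (mem_nbhd_two_of_steps hhx (hh.mem hy) (hh'E y hy) (hh.2 x hx y hy hxy) (hh'h y hy)) ?_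
  rw [hh'a x hx, hh'a y hy]
  exact ha.2 x hx y hy hxy

lemma exists_lift_of_digHomotopyRelEnds [Std.Symm κ] [Std.Symm lam]
    (hloc : IsLocalIso p E Bs κ lam 2) (hmaps : MapsTo p E Bs) {m s : ℕ}
    {F : ℤ → ℤ → B} {f g : ℤ → B} (hF : DigHomotopyRelEnds Bs lam m s F f g) {h : ℤ → A}
    (hh : IsDigPath E κ m h) (hhf : ∀ x ∈ Icc (0 : ℤ) m, p (h x) = f x) :
    ∃ h' : ℤ → A, IsDigPath E κ m h' ∧ (∀ x ∈ Icc (0 : ℤ) m, p (h' x) = g x) ∧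
      h' 0 = h 0 ∧ h' m = h m := by
  obtain ⟨hFmem, hFends, hFtime, hFspace, hFfix⟩ := hF
  have hslice : ∀ t : ℕ, t ≤ s → ∃ h' : ℤ → A, IsDigPath E κ m h' ∧
      (∀ x ∈ Icc (0 : ℤ) m, p (h' x) = F x t) ∧ h' 0 = h 0 ∧ h' m = h m := by
    intro t
    induction t with
    | zero => exact fun _ => ⟨h, hh, fun x hx => (hhf x hx).trans (hFends x hx).1.symm, rfl, rfl⟩
    | succ t ih =>
      intro ht
      have htI : (t : ℤ) ∈ Icc (0 : ℤ) s := ⟨by positivity, by omega⟩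
      have ht1I : ((t + 1 : ℕ) : ℤ) ∈ Icc (0 : ℤ) s := ⟨by positivity, by omega⟩
      obtain ⟨h₀, hh₀, hh₀F, hh₀0, hh₀m⟩ := ih (by omega)
      obtain ⟨h₁, hh₁, hh₁F⟩ := hloc.exists_lift_adj_to_lift hmaps hh₀
        (a := fun x => F x (t + 1 : ℕ))
        ⟨fun x hx => hFmem x hx _ ht1I, fun x hx y hy hxy => hFspace _ ht1I x hx y hy hxy⟩
        (fun x hx => hh₀F x hx ▸ hFtime x hx _ htI _ ht1I (by simp [adj2]))
      have hfixed : ∀ x ∈ ({0, (m : ℤ)} : Set ℤ), h₁ x = h₀ x := fun x hx' => by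
        have hx : x ∈ Icc (0 : ℤ) m := by rcases hx' with rfl | rfl <;> simp
        refine (hloc.eq_of_adj_of_map_eq (hh₀.mem hx) (hh₁.mem hx) (hh₁F x hx).2 ?_).symm
        rw [(hh₁F x hx).1, hh₀F x hx]
        rcases hx' with rfl | rfl
        exacts [((hFfix _ htI).1).trans (hFfix _ ht1I).1.symm,
          ((hFfix _ htI).2).trans (hFfix _ ht1I).2.symm]
      exact ⟨h₁, hh₁, fun x hx => (hh₁F x hx).1, (hfixed 0 (by simp)).trans hh₀0,
        (hfixed m (by simp)).trans hh₀m⟩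
  obtain ⟨h', hh', hh'F, hh'0, hh'm⟩ := hslice s le_rfl
  exact ⟨h', hh', fun x hx => (hh'F x hx).trans (hFends x hx).2, hh'0, hh'm⟩

lemma injOn_of_digSimplyConnected [Std.Symm κ] [Std.Symm lam]
    (hloc : IsLocalIso p E Bs κ lam 2) (hconn : DigConnected E κ) (hmaps : MapsTo p E Bs)
    (hcont : DigContOn p E κ lam) (hsc : DigSimplyConnected Bs lam) : InjOn p E := by
  intro e₁ he₁ e₂ he₂ hp
  obtain ⟨m, g, hg, hg0, hgm⟩ := hconn e₁ he₁ e₂ he₂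
  obtain ⟨m', s, f', c, F, ⟨φ, hφ0, hφm, hφstep, hf'⟩, ⟨ψ, -, -, -, hc⟩, hF⟩ :=
    hsc.2 (p e₁) (hmaps he₁) m (p ∘ g) (hg.map hmaps hcont) (by simp [hg0]) (by simp [hgm, hp])
  obtain ⟨h, hh, hhc, hh0, hhm⟩ := hloc.exists_lift_of_digHomotopyRelEnds hmaps hF
    (hg.comp_trivialExt hφ0 hφm hφstep) (fun x hx => (hf' x hx).symm)
  have hconst : EqOn h (fun _ => e₁) (Icc 0 m') :=
    hloc.uniqLiftsProp m' h _ hh (isDigPath_const he₁)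
      (fun x hx => (hhc x hx).trans (hc x hx)) (by simp [hh0, hφ0, hg0])
  simpa [hhm, hφm, hgm] using (hconst ⟨by positivity, le_rfl⟩).symm

end IsLocalIso

theorem cor_4_9_general {N M : ℕ} (E : Set (Fin N → ℤ)) (Bs : Set (Fin M → ℤ))
    (κ : (Fin N → ℤ) → (Fin N → ℤ) → Prop) (lam : (Fin M → ℤ) → (Fin M → ℤ) → Prop)
    (hκ : IsAdjacency κ) (hlam : IsAdjacency lam)
    (hconnE : DigConnected E κ)
    (p : (Fin N → ℤ) → (Fin M → ℤ))
    (hmaps : Set.MapsTo p E Bs) (hsurj : Set.SurjOn p E Bs)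
    (hcont : DigContOn p E κ lam)
    (hloc : IsLocalIso p E Bs κ lam 2)
    (hsc : DigSimplyConnected Bs lam) :
    IsDigIsoOn p E Bs κ lam := by
  have : Std.Symm κ := symm_def.mpr hκ.1
  have : Std.Symm lam := symm_def.mpr hlam.1
  have hinj := hloc.injOn_of_digSimplyConnected hconnE hmaps hcont hsc
  refine ⟨hmaps, hinj, hsurj, hcont, fun x₀ hx₀ x₁ hx₁ hadj => ?_⟩
  obtain ⟨x, hx, hpx, hx₀x⟩ := hloc.exists_adj_lift hmaps hx₀ (hmaps hx₁) (Or.inr hadj)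
  rwa [hinj hx hx₁ hpx] at hx₀x

/-- Corollary 4.9: a `(κ,λ)`-continuous surjection between connected digital images which is
a radius 2 local isomorphism is a `(κ,λ)`-isomorphism whenever `Bs` is simply connected. -/
theorem cor_4_9 {N M : ℕ} (E : Set (Fin N → ℤ)) (Bs : Set (Fin M → ℤ))
    (κ : (Fin N → ℤ) → (Fin N → ℤ) → Prop) (lam : (Fin M → ℤ) → (Fin M → ℤ) → Prop)
    (hκ : IsAdjacency κ) (hlam : IsAdjacency lam)
    (hconnE : DigConnected E κ) (hconnB : DigConnected Bs lam)
    (p : (Fin N → ℤ) → (Fin M → ℤ))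
    (hmaps : Set.MapsTo p E Bs) (hsurj : Set.SurjOn p E Bs)
    (hcont : DigContOn p E κ lam)
    (hloc : IsLocalIso p E Bs κ lam 2)
    (hsc : DigSimplyConnected Bs lam) :
    IsDigIsoOn p E Bs κ lam :=
  cor_4_9_general E Bs κ lam hκ hlam hconnE p hmaps hsurj hcont hloc hsc
end
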